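/- Let μ ∈ [0,1], β ≥ 0, τ > Δ₀ ≥ 0, α_r ≥ 1, α_c ≥ 1, and suppose (τ − Δ₀)(α_r − 1) ≥ 1 + α_c. Then (τ − Δ₀)/((τ − Δ₀) + (1 + α_c)β) · (μ + (α_r − 1)β) ≥ μ. -/

import Mathlib

theorem le_div_add_mul_mul_add_mul {𝕜 : Type*} [Field 𝕜] [LinearOrder 𝕜] [IsStrictOrderedRing 𝕜]
    {μ β d c k : 𝕜} (hμ : μ ≤ 1) (hβ : 0 ≤ β) (hd : 0 < d) (hc : 0 ≤ c) (hck : c ≤ d * k) :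
    μ ≤ d / (d + c * β) * (μ + k * β) := by
  rw [div_mul_eq_mul_div, le_div_iff₀ (by positivity)]
  have hcost : μ * (c * β) ≤ d * (k * β) :=
    calc μ * (c * β) ≤ c * β := mul_le_of_le_one_left (by positivity) hμ
      _ ≤ d * k * β := mul_le_mul_of_nonneg_right hck hβ
      _ = d * (k * β) := mul_assoc d k β
  linear_combination hcost

theorem fucb_optimism_core_general (μ β τ Δ₀ αr αc : ℝ)
    (hμ : μ ∈ Set.Icc (0 : ℝ) 1) (hβ : 0 ≤ β)
    (hτ : Δ₀ < τ)
    (hαc : 1 ≤ αc)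
    (hcond : 1 + αc ≤ (τ - Δ₀) * (αr - 1)) :
    μ ≤ (τ - Δ₀) / ((τ - Δ₀) + (1 + αc) * β) * (μ + (αr - 1) * β) :=
  le_div_add_mul_mul_add_mul hμ.2 hβ (sub_pos.2 hτ) (by linarith) hcond

/-- Algebraic core of the F-UCB optimism argument. -/
theorem fucb_optimism_core (μ β τ Δ₀ αr αc : ℝ)
    (hμ : μ ∈ Set.Icc (0 : ℝ) 1) (hβ : 0 ≤ β)
    (hΔ₀ : 0 ≤ Δ₀) (hτ : Δ₀ < τ)
    (hαr : 1 ≤ αr) (hαc : 1 ≤ αc)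
    (hcond : 1 + αc ≤ (τ - Δ₀) * (αr - 1)) :
    μ ≤ (τ - Δ₀) / ((τ - Δ₀) + (1 + αc) * β) * (μ + (αr - 1) * β) :=
  fucb_optimism_core_general μ β τ Δ₀ αr αc hμ hβ hτ hαc hcond
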